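/- arXiv:2102.08891 — 3 statements merged into one kernel-verified Lean document; each statement's English description precedes it below -/
import Mathlib

section
/- For every k ∈ ℝ with k ≠ 0 and every ζ ∈ ℝ³, one has |λ₁(ζ + k e₁) − λ₁(ζ) − ω| ≥ √(1+k²) − |k| > 0, where ω = √(1+k²). In particular the auto-resonance phase function Φ₁₁ has no zeros. -/
lemma sqrt_lip (x y : ℝ) (hx : 0 ≤ x) (hy : 0 ≤ y) :
    |Real.sqrt (1 + x ^ 2) - Real.sqrt (1 + y ^ 2)| ≤ |x - y| := by
  have ha : (0:ℝ) ≤ 1 + x ^ 2 := by positivity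
  have hb : (0:ℝ) ≤ 1 + y ^ 2 := by positivity
  have ha2 := Real.sq_sqrt ha
  have hb2 := Real.sq_sqrt hb
  have hxa : x ≤ Real.sqrt (1 + x ^ 2) := by
    nlinarith [Real.sqrt_nonneg (1 + x ^ 2)]
  have hyb : y ≤ Real.sqrt (1 + y ^ 2) := by
    nlinarith [Real.sqrt_nonneg (1 + y ^ 2)]
  have h1 : (0:ℝ) < Real.sqrt (1 + x ^ 2) := Real.sqrt_pos.mpr (by positivity)
  have h2 : (0:ℝ) < Real.sqrt (1 + y ^ 2) := Real.sqrt_pos.mpr (by positivity)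
  rw [abs_le]
  constructor
  · rcases abs_cases (x - y) with ⟨h, _⟩ | ⟨h, _⟩ <;> nlinarith
  · rcases abs_cases (x - y) with ⟨h, _⟩ | ⟨h, _⟩ <;> nlinarith

/-- For `k ≠ 0` and every `ζ ∈ ℝ³`,
`|λ₁(ζ + k e₁) − λ₁(ζ) − ω| ≥ √(1+k²) − |k| > 0` where `ω = √(1+k²)`.
In particular the auto-resonance phase `Φ₁₁` has no zeros. -/
theorem stmt1 (k : ℝ) (hk : k ≠ 0) (ζ : EuclideanSpace ℝ (Fin 3)) :
    |Real.sqrt (1 + ‖ζ + k • (EuclideanSpace.single (0 : Fin 3) (1 : ℝ))‖ ^ 2)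
        - Real.sqrt (1 + ‖ζ‖ ^ 2) - Real.sqrt (1 + k ^ 2)|
      ≥ Real.sqrt (1 + k ^ 2) - |k|
    ∧ 0 < Real.sqrt (1 + k ^ 2) - |k| := by
  set e := EuclideanSpace.single (0 : Fin 3) (1 : ℝ)
  have hke : ‖k • e‖ = |k| := by
    rw [norm_smul, Real.norm_eq_abs, EuclideanSpace.norm_single]
    simp
  have hnd : |‖ζ + k • e‖ - ‖ζ‖| ≤ |k| := by
    have := abs_norm_sub_norm_le (ζ + k • e) ζ
    simpa [hke] using this
  have hlip := sqrt_lip ‖ζ + k • e‖ ‖ζ‖ (norm_nonneg _) (norm_nonneg _)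
  have hD : |Real.sqrt (1 + ‖ζ + k • e‖ ^ 2) - Real.sqrt (1 + ‖ζ‖ ^ 2)| ≤ |k| :=
    hlip.trans hnd
  have hw : |k| < Real.sqrt (1 + k ^ 2) := by
    have h := Real.sq_sqrt (show (0:ℝ) ≤ 1 + k ^ 2 by positivity)
    have h0 : (0:ℝ) ≤ Real.sqrt (1 + k ^ 2) := Real.sqrt_nonneg _
    nlinarith [sq_abs k, abs_nonneg k]
  refine ⟨?_, by linarith⟩
  set a := Real.sqrt (1 + ‖ζ + k • e‖ ^ 2)
  set b := Real.sqrt (1 + ‖ζ‖ ^ 2)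
  have : Real.sqrt (1 + k ^ 2) - |a - b| ≤ |a - b - Real.sqrt (1 + k ^ 2)| := by
    rcases abs_cases (a - b) with ⟨h, _⟩ | ⟨h, _⟩ <;>
      rcases abs_cases (a - b - Real.sqrt (1 + k ^ 2)) with ⟨h2, _⟩ | ⟨h2, _⟩ <;> linarith
  linarith [hD]
end

section
/- Let θ ∈ (0,1) and k ∈ ℝ with 1 + √(1 + θ²k²) < √(1 + k²). Then there exists ξ strictly between −k and 0 such that √(1 + (ξ+k)²) + √(1 + θ²ξ²) = √(1 + k²). That is, a (1,4) resonance occurs. -/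
/-- For `θ ∈ (0,1)` and `k` with `1 + √(1 + θ²k²) < √(1 + k²)`, there exists `ξ`
strictly between `−k` and `0` with `√(1 + (ξ+k)²) + √(1 + θ²ξ²) = √(1 + k²)`:
a (1,4) resonance occurs. -/
theorem stmt7 (θ k : ℝ) (hθ0 : 0 < θ) (hθ1 : θ < 1)
    (hres : 1 + Real.sqrt (1 + θ ^ 2 * k ^ 2) < Real.sqrt (1 + k ^ 2)) :
    ∃ ξ ∈ Set.Ioo (min (-k) 0) (max (-k) 0),
      Real.sqrt (1 + (ξ + k) ^ 2) + Real.sqrt (1 + θ ^ 2 * ξ ^ 2)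
        = Real.sqrt (1 + k ^ 2) := by
  set f := fun ξ : ℝ => Real.sqrt (1 + (ξ + k) ^ 2) + Real.sqrt (1 + θ ^ 2 * ξ ^ 2) with hf
  have hcont : Continuous f := by fun_prop
  have hf0 : f 0 = Real.sqrt (1 + k ^ 2) + 1 := by
    simp [hf]
  have hfk : f (-k) = 1 + Real.sqrt (1 + θ ^ 2 * k ^ 2) := by
    simp [hf]
  have hk : k ≠ 0 := by
    rintro rfl
    norm_num at hres
  rcases hk.lt_or_gt with hkneg | hkpos
  · -- k < 0 : min = 0, max = -k
    have hmin : min (-k) 0 = 0 := by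
      rw [min_eq_right]; linarith
    have hmax : max (-k) 0 = -k := by
      rw [max_eq_left]; linarith
    rw [hmin, hmax]
    have h01 : (0:ℝ) ≤ -k := by linarith
    have hmem : Real.sqrt (1 + k ^ 2) ∈ Set.Ioo (f (-k)) (f 0) := by
      constructor
      · rw [hfk]; exact hres
      · rw [hf0]; linarith
    obtain ⟨ξ, hξ, hfξ⟩ := intermediate_value_Ioo' h01 hcont.continuousOn hmem
    exact ⟨ξ, hξ, hfξ⟩
  · -- k > 0 : min = -k, max = 0
    have hmin : min (-k) 0 = -k := by
      rw [min_eq_left]; linarith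
    have hmax : max (-k) 0 = 0 := by
      rw [max_eq_right]; linarith
    rw [hmin, hmax]
    have h01 : (-k:ℝ) ≤ 0 := by linarith
    have hmem : Real.sqrt (1 + k ^ 2) ∈ Set.Ioo (f (-k)) (f 0) := by
      constructor
      · rw [hfk]; exact hres
      · rw [hf0]; linarith
    obtain ⟨ξ, hξ, hfξ⟩ := intermediate_value_Ioo h01 hcont.continuousOn hmem
    exact ⟨ξ, hξ, hfξ⟩
end

section
/- Let θ ∈ (0,1), k ∈ ℝ, ω = √(1+k²), and suppose ω ≤ (1−θ²)/θ². If ζ = (ξ,η) ∈ ℝ × ℝ² satisfies both √(1+|ζ+ke₁|²) = ω + √(1+θ²|ζ|²) and η/√(1+|ζ+ke₁|²) = θ²η/√(1+θ²|ζ|²), then η = 0. That is, every (1,2) space-time resonance lies on the axis {η = 0}. -/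
/-- Let `θ ∈ (0,1)`, `ω = √(1+k²) ≤ (1−θ²)/θ²`. If `ζ = (ξ,η) ∈ ℝ × ℝ²` satisfies
both `√(1+|ζ+ke₁|²) = ω + √(1+θ²|ζ|²)` and `η/√(1+|ζ+ke₁|²) = θ²η/√(1+θ²|ζ|²)`,
then `η = 0`: every (1,2) space-time resonance lies on the axis `{η = 0}`. -/
theorem stmt9 (θ k : ℝ) (hθ0 : 0 < θ) (hθ1 : θ < 1)
    (hω : Real.sqrt (1 + k ^ 2) ≤ (1 - θ ^ 2) / θ ^ 2)
    (ξ : ℝ) (η : EuclideanSpace ℝ (Fin 2))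
    (hres : Real.sqrt (1 + ((ξ + k) ^ 2 + ‖η‖ ^ 2))
      = Real.sqrt (1 + k ^ 2) + Real.sqrt (1 + θ ^ 2 * (ξ ^ 2 + ‖η‖ ^ 2)))
    (hgrad : (1 / Real.sqrt (1 + ((ξ + k) ^ 2 + ‖η‖ ^ 2))) • η
      = (θ ^ 2 / Real.sqrt (1 + θ ^ 2 * (ξ ^ 2 + ‖η‖ ^ 2))) • η) :
    η = 0 := by
  by_contra hη
  set A := Real.sqrt (1 + ((ξ + k) ^ 2 + ‖η‖ ^ 2)) with hA
  set B := Real.sqrt (1 + θ ^ 2 * (ξ ^ 2 + ‖η‖ ^ 2)) with hB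
  set w := Real.sqrt (1 + k ^ 2) with hw
  have hηn : 0 < ‖η‖ ^ 2 := by
    have := norm_pos_iff.mpr hη
    positivity
  have hApos : 0 < A := Real.sqrt_pos.mpr (by nlinarith)
  have hBpos : 0 < B := Real.sqrt_pos.mpr (by nlinarith)
  have hB2 : B ^ 2 = 1 + θ ^ 2 * (ξ ^ 2 + ‖η‖ ^ 2) :=
    Real.sq_sqrt (by nlinarith)
  have hB1 : 1 ≤ B := by nlinarith
  have hw1 : 1 ≤ w := by
    have h := Real.sqrt_le_sqrt (show (1:ℝ) ≤ 1 + k ^ 2 by nlinarith)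
    rw [hw]
    simpa using h
  -- coefficients equal
  have hc : 1 / A = θ ^ 2 / B := by
    have h0 : (1 / A - θ ^ 2 / B) • η = 0 := by
      rw [sub_smul, hgrad, sub_self]
    rcases smul_eq_zero.mp h0 with h | h
    · linarith [sub_eq_zero.mp (by linarith [h] : 1 / A - θ ^ 2 / B = 0)]
    · exact absurd h hη
  have hBA : B = θ ^ 2 * A := by
    field_simp at hc
    linarith
  have hθ2 : 0 < 1 - θ ^ 2 := by nlinarith
  -- B(1-θ²) = θ² w
  have hBA' : B = θ ^ 2 * (w + B) := by rw [← hres]; exact hBA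
  have hkey : B * (1 - θ ^ 2) = θ ^ 2 * w := by linear_combination hBA'
  have hwle : θ ^ 2 * w ≤ 1 - θ ^ 2 := by
    have := mul_le_mul_of_nonneg_left hω (by positivity : (0:ℝ) ≤ θ ^ 2)
    calc θ ^ 2 * w ≤ θ ^ 2 * ((1 - θ ^ 2) / θ ^ 2) := this
      _ = 1 - θ ^ 2 := by field_simp
  have hBle : B ≤ 1 := by nlinarith
  have : B = 1 := le_antisymm hBle hB1
  rw [this] at hB2
  nlinarith [mul_pos (pow_pos hθ0 2) hηn, mul_nonneg (sq_nonneg θ) (sq_nonneg ξ)]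
end
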